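/- arXiv:1808.08566 — 2 statements merged into one kernel-verified Lean document; each statement's English description precedes it below -/
import Mathlib

section
/- Let g be a polynomial in one variable of degree at most m. Then the operator norm of the matrix {(Δg)(ξ,η)}_{ξ,η ∈ Π_m} on ℂ^{Π_m} is at most m·‖g‖_{L^∞(𝕋)}, where (Δg) is the divided difference of g and ‖g‖_{L^∞(𝕋)} is the supremum of |g| on the unit circle. -/
open Complex Polynomial

section EEHelpers

open Finset

/-- The root of unity `exp(2πik/N)`. -/
noncomputable def ee (N : ℕ) (k : ℤ) : ℂ := Complex.exp (2 * Real.pi * Complex.I * k / N)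

lemma ee_add (N : ℕ) (k l : ℤ) : ee N (k + l) = ee N k * ee N l := by
  rw [ee, ee, ee, ← Complex.exp_add]; congr 1; push_cast; ring

lemma ee_zero (N : ℕ) : ee N 0 = 1 := by simp [ee]

lemma ee_conj (N : ℕ) (k : ℤ) : (starRingEnd ℂ) (ee N k) = ee N (-k) := by
  rw [ee, ee, ← Complex.exp_conj]
  congr 1
  simp only [map_div₀, map_mul, Complex.conj_I, Complex.conj_ofReal, map_ofNat,
    map_intCast, map_natCast, Int.cast_neg]
  ring

lemma ee_pow (N : ℕ) (k : ℤ) (t : ℕ) : ee N k ^ t = ee N (k * t) := by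
  rw [ee, ee, ← Complex.exp_nat_mul]; congr 1; push_cast; ring

lemma ee_normSq (N : ℕ) (k : ℤ) : Complex.normSq (ee N k) = 1 := by
  have h : ((Complex.normSq (ee N k) : ℝ) : ℂ) = 1 := by
    rw [← Complex.mul_conj, ee_conj, ← ee_add, add_neg_cancel, ee_zero]
  exact_mod_cast h

lemma ee_abs (N : ℕ) (k : ℤ) : ‖ee N k‖ = 1 := by
  rw [Complex.norm_def, ee_normSq, Real.sqrt_one]

lemma two_pi_I_ne_zero' : (2 * Real.pi * Complex.I : ℂ) ≠ 0 := by
  simp [Real.pi_ne_zero, Complex.I_ne_zero]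

lemma ee_nat_mul (N : ℕ) (hN : 0 < N) (c : ℤ) : ee N (N * c) = 1 := by
  have hN' : (N : ℂ) ≠ 0 := Nat.cast_ne_zero.mpr hN.ne'
  rw [ee]
  have h : (2 * Real.pi * Complex.I * ((N : ℤ) * c : ℤ) : ℂ) / N
      = c * (2 * Real.pi * Complex.I) := by
    push_cast
    field_simp
  rw [h, Complex.exp_int_mul_two_pi_mul_I]

lemma sum_ee (N : ℕ) (hN : 0 < N) (k : ℤ) :
    ∑ t ∈ range N, ee N (k * t) = if (N : ℤ) ∣ k then (N : ℂ) else 0 := by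
  have hpow : ∀ t : ℕ, ee N (k * t) = ee N k ^ t := fun t => (ee_pow N k t).symm
  simp_rw [hpow]
  by_cases h : (N : ℤ) ∣ k
  · obtain ⟨c, rfl⟩ := h
    have h1 : ee N ((N : ℤ) * c) = 1 := ee_nat_mul N hN c
    rw [if_pos ⟨c, rfl⟩]
    simp [h1]
  · have hne : ee N k ≠ 1 := by
      intro he
      rw [ee, Complex.exp_eq_one_iff] at he
      obtain ⟨n, hn⟩ := he
      apply h
      have hN' : (N : ℂ) ≠ 0 := Nat.cast_ne_zero.mpr hN.ne'
      have h2 : (2 * Real.pi * Complex.I : ℂ) * k = (2 * Real.pi * Complex.I) * (n * N) := by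
        field_simp at hn
        rw [hn]; ring
      have h3 : (k : ℂ) = (n * N : ℤ) := by
        have := mul_left_cancel₀ two_pi_I_ne_zero' h2
        push_cast
        exact this
      have h4 : k = n * N := by exact_mod_cast h3
      exact ⟨n, h4.trans (mul_comm n N)⟩
    rw [geom_sum_eq hne]
    have h4 : ee N k ^ N = 1 := by
      rw [ee_pow, mul_comm]
      exact ee_nat_mul N hN k
    rw [h4, if_neg h]
    simp

lemma parseval (N K : ℕ) (hN : 0 < N) (hK : K ≤ N) (ε : ℤ) (hε : ε = 1 ∨ ε = -1)
    (c : ℕ → ℂ) :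
    ∑ t ∈ range N, Complex.normSq (∑ j ∈ range K, c j * ee N (ε * j * t))
      = N * ∑ j ∈ range K, Complex.normSq (c j) := by
  set S : ℕ → ℂ := fun t => ∑ j ∈ range K, c j * ee N (ε * j * t) with hS
  have key : ∑ t ∈ range N, (S t * (starRingEnd ℂ) (S t))
      = (N : ℂ) * ∑ j ∈ range K, (c j * (starRingEnd ℂ) (c j)) := by
    have conjS : ∀ t : ℕ, (starRingEnd ℂ) (S t)
        = ∑ j' ∈ range K, (starRingEnd ℂ) (c j') * ee N (-(ε * j' * t)) := by
      intro t
      rw [hS, map_sum]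
      exact Finset.sum_congr rfl fun j' _ => by rw [map_mul, ee_conj]
    calc ∑ t ∈ range N, (S t * (starRingEnd ℂ) (S t))
        = ∑ t ∈ range N, ∑ j ∈ range K, ∑ j' ∈ range K,
            (c j * (starRingEnd ℂ) (c j')) * ee N ((ε * (j - j')) * t) := by
          refine Finset.sum_congr rfl fun t _ => ?_
          rw [conjS, hS, Finset.sum_mul_sum]
          refine Finset.sum_congr rfl fun j _ => Finset.sum_congr rfl fun j' _ => ?_
          have : ee N (ε * j * t) * ee N (-(ε * j' * t)) = ee N ((ε * (j - j')) * t) := by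
            rw [← ee_add]; congr 1; ring
          calc c j * ee N (ε * j * t) * ((starRingEnd ℂ) (c j') * ee N (-(ε * j' * t)))
              = (c j * (starRingEnd ℂ) (c j'))
                  * (ee N (ε * j * t) * ee N (-(ε * j' * t))) := by ring
            _ = (c j * (starRingEnd ℂ) (c j')) * ee N ((ε * (j - j')) * t) := by rw [this]
      _ = ∑ j ∈ range K, ∑ j' ∈ range K,
            (c j * (starRingEnd ℂ) (c j')) * ∑ t ∈ range N, ee N ((ε * (j - j')) * t) := by
          rw [Finset.sum_comm]
          refine Finset.sum_congr rfl fun j _ => ?_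
          rw [Finset.sum_comm]
          exact Finset.sum_congr rfl fun j' _ => (Finset.mul_sum _ _ _).symm
      _ = ∑ j ∈ range K, ∑ j' ∈ range K,
            (if j' = j then (c j * (starRingEnd ℂ) (c j')) * N else 0) := by
          refine Finset.sum_congr rfl fun j hj => Finset.sum_congr rfl fun j' hj' => ?_
          rw [sum_ee N hN]
          have hiff : ((N : ℤ) ∣ ε * ((j : ℤ) - j')) ↔ j' = j := by
            have hjK := Finset.mem_range.mp hj
            have hj'K := Finset.mem_range.mp hj'
            have habs : |(j : ℤ) - j'| < N := by
              rw [abs_lt]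
              constructor <;> omega
            have hdvd : ((N : ℤ) ∣ ε * ((j : ℤ) - j')) ↔ ((N : ℤ) ∣ ((j : ℤ) - j')) := by
              rcases hε with h | h <;> subst h <;> simp [dvd_neg]
              exact dvd_sub_comm
            rw [hdvd]
            constructor
            · intro hd
              have h0 := Int.eq_zero_of_abs_lt_dvd hd (by exact_mod_cast habs)
              have : (j : ℤ) = j' := by omega
              omega
            · rintro rfl; simp
          rw [mul_ite, mul_zero]
          exact if_congr hiff rfl rfl
      _ = (N : ℂ) * ∑ j ∈ range K, (c j * (starRingEnd ℂ) (c j)) := by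
          rw [Finset.mul_sum]
          refine Finset.sum_congr rfl fun j hj => ?_
          rw [Finset.sum_ite_eq' (range K) j
            (fun j' => (c j * (starRingEnd ℂ) (c j')) * (N : ℂ)), if_pos hj]
          ring
  have lhs : ∑ t ∈ range N, (S t * (starRingEnd ℂ) (S t))
      = ((∑ t ∈ range N, Complex.normSq (S t) : ℝ) : ℂ) := by
    push_cast
    exact Finset.sum_congr rfl fun t _ => Complex.mul_conj (S t)
  have rhs : (N : ℂ) * ∑ j ∈ range K, (c j * (starRingEnd ℂ) (c j))
      = (((N : ℝ) * ∑ j ∈ range K, Complex.normSq (c j) : ℝ) : ℂ) := by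
    push_cast
    congr 1
    exact Finset.sum_congr rfl fun j _ => Complex.mul_conj (c j)
  exact Complex.ofReal_injective (lhs.symm.trans (key.trans rhs))

end EEHelpers

/-- The divided difference `(Δg)(z,w)` of a one-variable polynomial. -/
noncomputable def dividedDiff (g : Polynomial ℂ) (z w : ℂ) : ℂ :=
  if z = w then (Polynomial.derivative g).eval z else (g.eval z - g.eval w) / (z - w)

section DDHelpers

open Finset

lemma reindex_core (m : ℕ) (g : Polynomial ℂ) (hg : g.natDegree ≤ m) (z w : ℂ) :
    ∑ n ∈ range (m + 1), g.coeff n * (∑ p ∈ range n, z ^ p * w ^ (n - 1 - p))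
      = ∑ p ∈ range m, ∑ q ∈ range m, g.coeff (p + q + 1) * z ^ p * w ^ q := by
  have hzero : ∀ p q : ℕ, m ≤ p + q → g.coeff (p + q + 1) = 0 := fun p q h =>
    Polynomial.coeff_eq_zero_of_natDegree_lt (by omega)
  rw [← Finset.sum_product']
  have hsub : ((range m) ×ˢ (range m)).filter (fun x => x.1 + x.2 < m)
      ⊆ (range m) ×ˢ (range m) := Finset.filter_subset _ _
  rw [← Finset.sum_subset hsub (fun x hx hnx => by
    simp only [Finset.mem_filter, not_and] at hnx
    exact mul_eq_zero_of_left (mul_eq_zero_of_left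
      (hzero x.1 x.2 (by have := hnx hx; omega)) _) _)]
  simp_rw [Finset.mul_sum]
  rw [Finset.sum_sigma' (range (m + 1)) (fun n => range n)
    (fun n p => g.coeff n * (z ^ p * w ^ (n - 1 - p)))]
  refine Finset.sum_nbij' (fun x => (x.2, x.1 - 1 - x.2)) (fun x => ⟨x.1 + x.2 + 1, x.1⟩)
    ?_ ?_ ?_ ?_ ?_
  · rintro ⟨n, p⟩ hx
    simp only [Finset.mem_sigma, Finset.mem_range] at hx
    simp only [Finset.mem_filter, Finset.mem_product, Finset.mem_range]
    omega
  · rintro ⟨p, q⟩ hx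
    simp only [Finset.mem_filter, Finset.mem_product, Finset.mem_range] at hx
    simp only [Finset.mem_sigma, Finset.mem_range]
    omega
  · rintro ⟨n, p⟩ hx
    simp only [Finset.mem_sigma, Finset.mem_range] at hx
    simp only [Sigma.mk.inj_iff]
    constructor
    · omega
    · exact heq_of_eq rfl
  · rintro ⟨p, q⟩ hx
    simp only [Finset.mem_filter, Finset.mem_product, Finset.mem_range] at hx
    simp only [Prod.mk.injEq]
    exact ⟨trivial, by omega⟩
  · rintro ⟨n, p⟩ hx
    simp only [Finset.mem_sigma, Finset.mem_range] at hx
    have h1 : p + (n - 1 - p) + 1 = n := by omega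
    simp only [h1]
    ring

lemma dividedDiff_eq (m : ℕ) (g : Polynomial ℂ) (hg : g.natDegree ≤ m) (z w : ℂ) :
    dividedDiff g z w = ∑ p ∈ range m, ∑ q ∈ range m, g.coeff (p + q + 1) * z ^ p * w ^ q := by
  rw [← reindex_core m g hg z w, dividedDiff]
  by_cases h : z = w
  · rw [if_pos h]
    subst h
    have inner : ∀ n : ℕ, (∑ p ∈ range n, z ^ p * z ^ (n - 1 - p)) = (n : ℂ) * z ^ (n - 1) := by
      intro n
      have hc : ∀ p ∈ range n, z ^ p * z ^ (n - 1 - p) = z ^ (n - 1) := by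
        intro p hp
        rw [← pow_add]
        congr 1
        have := Finset.mem_range.mp hp; omega
      rw [Finset.sum_congr rfl hc, Finset.sum_const, Finset.card_range, nsmul_eq_mul]
    simp_rw [inner]
    conv_lhs => rw [Polynomial.as_sum_range' g (m + 1) (Nat.lt_succ_of_le hg)]
    rw [map_sum, Polynomial.eval_finset_sum]
    refine Finset.sum_congr rfl fun n _ => ?_
    rw [Polynomial.derivative_monomial, Polynomial.eval_monomial]
    ring
  · rw [if_neg h, div_eq_iff (sub_ne_zero.mpr h),
      Polynomial.eval_eq_sum_range' (Nat.lt_succ_of_le hg) z,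
      Polynomial.eval_eq_sum_range' (Nat.lt_succ_of_le hg) w,
      ← Finset.sum_sub_distrib, Finset.sum_mul]
    refine Finset.sum_congr rfl fun n _ => ?_
    rw [mul_assoc, geom_sum₂_mul z w n, mul_sub]

lemma coeff_formula (m : ℕ) (hm : 0 < m) (g : Polynomial ℂ) (hg : g.natDegree ≤ m)
    (w : ℕ → ℂ) (p : ℕ) (hp : p < m) :
    ∑ t ∈ range (2 * m), (g.eval (ee (2 * m) t) * ee (2 * m) (-(t : ℤ)) *
        (∑ q ∈ range m, w q * ee (2 * m) (-(q : ℤ) * t))) * ee (2 * m) (-(p : ℤ) * t)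
      = (2 * m : ℕ) * ∑ q ∈ range m, g.coeff (p + q + 1) * w q := by
  have hN : 0 < 2 * m := by omega
  have step1 : ∀ t : ℕ, (g.eval (ee (2 * m) t) * ee (2 * m) (-(t : ℤ)) *
        (∑ q ∈ range m, w q * ee (2 * m) (-(q : ℤ) * t))) * ee (2 * m) (-(p : ℤ) * t)
      = ∑ n ∈ range (m + 1), ∑ q ∈ range m,
          (g.coeff n * w q) * ee (2 * m) (((n : ℤ) - 1 - q - p) * t) := by
    intro t
    rw [Polynomial.eval_eq_sum_range' (Nat.lt_succ_of_le hg) (ee (2 * m) t)]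
    simp_rw [ee_pow]
    rw [Finset.sum_mul, Finset.sum_mul, Finset.sum_mul]
    refine Finset.sum_congr rfl fun n _ => ?_
    rw [mul_assoc, mul_assoc, Finset.sum_mul, Finset.mul_sum, Finset.mul_sum]
    refine Finset.sum_congr rfl fun q _ => ?_
    rw [show ((n : ℤ) - 1 - q - p) * t = (t : ℤ) * n + (-(t : ℤ) + (-(q : ℤ) * t + -(p : ℤ) * t))
      by ring, ee_add, ee_add, ee_add]
    ring
  simp_rw [step1]
  rw [Finset.sum_comm]
  have step2 : ∀ n ∈ range (m + 1),
      ∑ t ∈ range (2 * m), ∑ q ∈ range m,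
          (g.coeff n * w q) * ee (2 * m) (((n : ℤ) - 1 - q - p) * t)
      = ∑ q ∈ range m, (if n = p + q + 1 then (g.coeff n * w q) * (2 * m : ℕ) else 0) := by
    intro n hn
    rw [Finset.sum_comm]
    refine Finset.sum_congr rfl fun q hq => ?_
    rw [← Finset.mul_sum, sum_ee _ hN]
    have hn' := Finset.mem_range.mp hn
    have hq' := Finset.mem_range.mp hq
    have hiff : ((2 * m : ℕ) : ℤ) ∣ ((n : ℤ) - 1 - q - p) ↔ n = p + q + 1 := by
      constructor
      · intro hd
        have habs : |(n : ℤ) - 1 - q - p| < ((2 * m : ℕ) : ℤ) := by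
          rw [abs_lt]; push_cast; omega
        have := Int.eq_zero_of_abs_lt_dvd hd habs
        omega
      · intro he; rw [he]; push_cast; simp [show ((p : ℤ) + q + 1 - 1 - q - p) = 0 by ring]
    rw [mul_ite, mul_zero]
    exact if_congr hiff rfl rfl
  rw [Finset.sum_congr rfl step2]
  have step3 : ∀ q ∈ range m,
      ∑ n ∈ range (m + 1), (if n = p + q + 1 then (g.coeff n * w q) * (2 * m : ℕ) else 0)
      = (2 * m : ℕ) * (g.coeff (p + q + 1) * w q) := by
    intro q hq
    rw [Finset.sum_ite_eq' (range (m + 1)) (p + q + 1)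
      (fun n => (g.coeff n * w q) * ((2 * m : ℕ) : ℂ))]
    by_cases hin : p + q + 1 ∈ range (m + 1)
    · rw [if_pos hin]; ring
    · rw [if_neg hin]
      have : g.coeff (p + q + 1) = 0 := by
        apply Polynomial.coeff_eq_zero_of_natDegree_lt
        have := Finset.mem_range.not.mp hin
        omega
      rw [this]; ring
  rw [Finset.sum_comm, Finset.sum_congr rfl step3, ← Finset.mul_sum]

lemma expand_A (m : ℕ) (g : Polynomial ℂ) (hg : g.natDegree ≤ m) (i : ℕ) (xx : ℕ → ℂ) :
    ∑ j ∈ range m, dividedDiff g (ee m i) (ee m j) * xx j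
      = ∑ p ∈ range m,
          (∑ q ∈ range m, g.coeff (p + q + 1) * (∑ j ∈ range m, xx j * ee m ((1 : ℤ) * j * q)))
            * ee m ((1 : ℤ) * p * i) := by
  simp_rw [dividedDiff_eq m g hg, Finset.sum_mul]
  rw [Finset.sum_comm]
  refine Finset.sum_congr rfl fun p _ => ?_
  rw [Finset.sum_comm]
  refine Finset.sum_congr rfl fun q _ => ?_
  conv_rhs => rw [Finset.mul_sum, Finset.sum_mul]
  refine Finset.sum_congr rfl fun j _ => ?_
  rw [ee_pow, ee_pow, show ((1 : ℤ) * j * q) = (j : ℤ) * q by ring,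
    show ((1 : ℤ) * p * i) = (i : ℤ) * p by ring]
  ring

end DDHelpers

/-- for a polynomial `g` of degree at most `m`, the matrix
`{(Δg)(ξ,η)}_{ξ,η ∈ Π_m}` (where `Π_m` is enumerated as `ξ_i = e^{2πii/m}`) has operator
norm on Euclidean `ℂ^m` at most `m · ‖g‖_{L^∞(𝕋)}`. -/
theorem dividedDiff_matrix_norm_le (m : ℕ) (hm : 0 < m) (g : Polynomial ℂ)
    (hg : g.natDegree ≤ m) :
    ‖Matrix.toEuclideanCLM (𝕜 := ℂ)
        (Matrix.of fun i j : Fin m =>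
          dividedDiff g ((Complex.exp (2 * Real.pi * Complex.I / m)) ^ (i : ℕ))
            ((Complex.exp (2 * Real.pi * Complex.I / m)) ^ (j : ℕ)))‖ ≤
      m * sSup ((fun z => ‖g.eval z‖) '' {z : ℂ | ‖z‖ = 1}) := by
  classical
  classical
  have hm' : (0 : ℝ) < m := by exact_mod_cast hm
  have hsphere : {z : ℂ | ‖z‖ = 1} = Metric.sphere (0 : ℂ) 1 := by
    ext z
    simp [Complex.dist_eq]
  have hbdd : BddAbove ((fun z => ‖g.eval z‖) '' {z : ℂ | ‖z‖ = 1}) := by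
    rw [hsphere]
    exact ((isCompact_sphere (0 : ℂ) 1).image
      (continuous_norm.comp g.continuous)).bddAbove
  set S := sSup ((fun z => ‖g.eval z‖) '' {z : ℂ | ‖z‖ = 1}) with hSdef
  have hSle : ∀ z : ℂ, ‖z‖ = 1 → ‖g.eval z‖ ≤ S := fun z hz =>
    le_csSup hbdd ⟨z, hz, rfl⟩
  have hS0 : 0 ≤ S := le_trans (norm_nonneg _) (hSle 1 (by simp))
  refine ContinuousLinearMap.opNorm_le_bound _ (by positivity) fun x => ?_
  open Finset in
  -- abbreviations
  let xx : ℕ → ℂ := fun j => if h : j < m then x ⟨j, h⟩ else 0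
  let wf : ℕ → ℂ := fun t => ∑ j ∈ range m, xx j * ee m ((1 : ℤ) * j * t)
  let uf : ℕ → ℂ := fun p => ∑ q ∈ range m, g.coeff (p + q + 1) * wf q
  have hxi : ∀ i : Fin m, Complex.exp (2 * Real.pi * Complex.I / m) ^ (i : ℕ)
      = ee m ((i : ℕ) : ℤ) := by
    intro i
    have hbase : Complex.exp (2 * Real.pi * Complex.I / m) = ee m 1 := by
      rw [ee]; norm_num
    rw [hbase, ee_pow, one_mul]
  -- component formula
  have hcomp : ∀ i : Fin m,
      (Matrix.toEuclideanCLM (𝕜 := ℂ)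
        (Matrix.of fun i j : Fin m =>
          dividedDiff g ((Complex.exp (2 * Real.pi * Complex.I / m)) ^ (i : ℕ))
            ((Complex.exp (2 * Real.pi * Complex.I / m)) ^ (j : ℕ)))) x i
      = ∑ p ∈ range m, uf p * ee m ((1 : ℤ) * p * i) := by
    intro i
    have h1 : (Matrix.toEuclideanCLM (𝕜 := ℂ)
        (Matrix.of fun i j : Fin m =>
          dividedDiff g ((Complex.exp (2 * Real.pi * Complex.I / m)) ^ (i : ℕ))
            ((Complex.exp (2 * Real.pi * Complex.I / m)) ^ (j : ℕ)))) x i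
        = ∑ j : Fin m,
            dividedDiff g ((Complex.exp (2 * Real.pi * Complex.I / m)) ^ (i : ℕ))
              ((Complex.exp (2 * Real.pi * Complex.I / m)) ^ (j : ℕ)) * x j := by
      rfl
    rw [h1]
    have h2 : ∑ j : Fin m,
        dividedDiff g ((Complex.exp (2 * Real.pi * Complex.I / m)) ^ (i : ℕ))
          ((Complex.exp (2 * Real.pi * Complex.I / m)) ^ (j : ℕ)) * x j
        = ∑ j ∈ range m, dividedDiff g (ee m ((i : ℕ) : ℤ)) (ee m (j : ℤ)) * xx j := by
      rw [← Fin.sum_univ_eq_sum_range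
        (fun j => dividedDiff g (ee m ((i : ℕ) : ℤ)) (ee m (j : ℤ)) * xx j) m]
      refine Finset.sum_congr rfl fun j _ => ?_
      rw [hxi i, hxi j]
      congr 1
      simp only [xx, j.isLt, dif_pos, Fin.eta]
    rw [h2, expand_A m g hg i xx]
  -- squared norms, Fin sums to range sums
  have hnormsq : ∀ z : ℂ, ‖z‖ ^ 2 = Complex.normSq z := fun z => by
    rw [Complex.sq_norm]
  -- step B
  have stepB : ∑ p ∈ range m, Complex.normSq
        (∑ j ∈ range m, uf j * ee m ((1 : ℤ) * j * p))
      = (m : ℝ) * ∑ p ∈ range m, Complex.normSq (uf p) :=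
    parseval m m hm le_rfl 1 (Or.inl rfl) uf
  -- step D
  have stepD : ∑ t ∈ range (2 * m), Complex.normSq
        (∑ q ∈ range m, wf q * ee (2 * m) ((-1 : ℤ) * q * t))
      = ((2 * m : ℕ) : ℝ) * ∑ q ∈ range m, Complex.normSq (wf q) :=
    parseval (2 * m) m (by omega) (by omega) (-1) (Or.inr rfl) wf
  have stepD' : ∑ q ∈ range m, Complex.normSq (wf q)
      = (m : ℝ) * ∑ j ∈ range m, Complex.normSq (xx j) :=
    parseval m m hm le_rfl 1 (Or.inl rfl) xx
  -- step C
  let hf : ℕ → ℂ := fun t => g.eval (ee (2 * m) t) * ee (2 * m) (-(t : ℤ)) *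
      (∑ q ∈ range m, wf q * ee (2 * m) (-(q : ℤ) * t))
  have st1 : ∀ p ∈ range m, ((2 * m : ℕ) : ℂ) * uf p
      = ∑ t ∈ range (2 * m), hf t * ee (2 * m) ((-1 : ℤ) * t * p) := by
    intro p hp
    rw [← coeff_formula m hm g hg wf p (Finset.mem_range.mp hp)]
    refine Finset.sum_congr rfl fun t _ => ?_
    rw [show (-(p : ℤ) * t) = (-1 : ℤ) * t * p by ring]
  have st3 : ∑ p ∈ range (2 * m), Complex.normSq
        (∑ t ∈ range (2 * m), hf t * ee (2 * m) ((-1 : ℤ) * t * p))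
      = ((2 * m : ℕ) : ℝ) * ∑ t ∈ range (2 * m), Complex.normSq (hf t) :=
    parseval (2 * m) (2 * m) (by omega) le_rfl (-1) (Or.inr rfl) hf
  have st4 : ∀ t : ℕ, Complex.normSq (hf t)
      ≤ S ^ 2 * Complex.normSq (∑ q ∈ range m, wf q * ee (2 * m) (-(q : ℤ) * t)) := by
    intro t
    have h5 : Complex.normSq (hf t) = Complex.normSq (g.eval (ee (2 * m) t)) *
        Complex.normSq (∑ q ∈ range m, wf q * ee (2 * m) (-(q : ℤ) * t)) := by
      show Complex.normSq (_ * _ * _) = _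
      rw [Complex.normSq_mul, Complex.normSq_mul, ee_normSq, mul_one]
    rw [h5]
    refine mul_le_mul_of_nonneg_right ?_ (Complex.normSq_nonneg _)
    rw [← Complex.sq_norm]
    exact pow_le_pow_left₀ (norm_nonneg _) (hSle _ (ee_abs _ _)) 2
  have st5 : ∑ t ∈ range (2 * m), Complex.normSq
        (∑ q ∈ range m, wf q * ee (2 * m) (-(q : ℤ) * t))
      = ∑ t ∈ range (2 * m), Complex.normSq
        (∑ q ∈ range m, wf q * ee (2 * m) ((-1 : ℤ) * q * t)) := by
    refine Finset.sum_congr rfl fun t _ => ?_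
    congr 1
    refine Finset.sum_congr rfl fun q _ => ?_
    rw [show (-(q : ℤ) * t) = (-1 : ℤ) * q * t by ring]
  have stepC : ∑ p ∈ range m, Complex.normSq (uf p)
      ≤ S ^ 2 * ∑ q ∈ range m, Complex.normSq (wf q) := by
    have hNpos : (0 : ℝ) < ((2 * m : ℕ) : ℝ) ^ 2 := by positivity
    refine le_of_mul_le_mul_left ?_ hNpos
    calc ((2 * m : ℕ) : ℝ) ^ 2 * ∑ p ∈ range m, Complex.normSq (uf p)
        = ∑ p ∈ range m, Complex.normSq (((2 * m : ℕ) : ℂ) * uf p) := by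
          rw [Finset.mul_sum]
          refine Finset.sum_congr rfl fun p _ => ?_
          rw [Complex.normSq_mul, Complex.normSq_natCast]
          ring
      _ = ∑ p ∈ range m, Complex.normSq
            (∑ t ∈ range (2 * m), hf t * ee (2 * m) ((-1 : ℤ) * t * p)) := by
          exact Finset.sum_congr rfl fun p hp => by rw [st1 p hp]
      _ ≤ ∑ p ∈ range (2 * m), Complex.normSq
            (∑ t ∈ range (2 * m), hf t * ee (2 * m) ((-1 : ℤ) * t * p)) := by
          refine Finset.sum_le_sum_of_subset_of_nonneg
            (Finset.range_subset_range.mpr (by omega)) fun _ _ _ => Complex.normSq_nonneg _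
      _ = ((2 * m : ℕ) : ℝ) * ∑ t ∈ range (2 * m), Complex.normSq (hf t) := st3
      _ ≤ ((2 * m : ℕ) : ℝ) * (S ^ 2 * ∑ t ∈ range (2 * m), Complex.normSq
            (∑ q ∈ range m, wf q * ee (2 * m) (-(q : ℤ) * t))) := by
          refine mul_le_mul_of_nonneg_left ?_ (by positivity)
          rw [Finset.mul_sum]
          exact Finset.sum_le_sum fun t _ => st4 t
      _ = ((2 * m : ℕ) : ℝ) ^ 2 * (S ^ 2 * ∑ q ∈ range m, Complex.normSq (wf q)) := by
          rw [st5, stepD]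
          ring
  -- total bound on squared norm
  have key : ∑ i : Fin m, ‖(Matrix.toEuclideanCLM (𝕜 := ℂ)
        (Matrix.of fun i j : Fin m =>
          dividedDiff g ((Complex.exp (2 * Real.pi * Complex.I / m)) ^ (i : ℕ))
            ((Complex.exp (2 * Real.pi * Complex.I / m)) ^ (j : ℕ)))) x i‖ ^ 2
      ≤ ((m : ℝ) * S) ^ 2 * ∑ i : Fin m, ‖x i‖ ^ 2 := by
    have hxxsum : ∑ i : Fin m, ‖x i‖ ^ 2 = ∑ j ∈ range m, Complex.normSq (xx j) := by
      rw [← Fin.sum_univ_eq_sum_range (fun j => Complex.normSq (xx j)) m]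
      refine Finset.sum_congr rfl fun i _ => ?_
      rw [hnormsq]
      congr 1
      simp only [xx, i.isLt, dif_pos, Fin.eta]
    calc ∑ i : Fin m, ‖(Matrix.toEuclideanCLM (𝕜 := ℂ)
            (Matrix.of fun i j : Fin m =>
              dividedDiff g ((Complex.exp (2 * Real.pi * Complex.I / m)) ^ (i : ℕ))
                ((Complex.exp (2 * Real.pi * Complex.I / m)) ^ (j : ℕ)))) x i‖ ^ 2
        = ∑ p ∈ range m, Complex.normSq
            (∑ j ∈ range m, uf j * ee m ((1 : ℤ) * j * p)) := by
          rw [← Fin.sum_univ_eq_sum_range (fun p => Complex.normSq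
            (∑ j ∈ range m, uf j * ee m ((1 : ℤ) * j * p))) m]
          refine Finset.sum_congr rfl fun i _ => ?_
          rw [hnormsq, hcomp i]
      _ = (m : ℝ) * ∑ p ∈ range m, Complex.normSq (uf p) := stepB
      _ ≤ (m : ℝ) * (S ^ 2 * ∑ q ∈ range m, Complex.normSq (wf q)) := by
          exact mul_le_mul_of_nonneg_left stepC (by positivity)
      _ = ((m : ℝ) * S) ^ 2 * ∑ j ∈ range m, Complex.normSq (xx j) := by
          rw [stepD']
          ring
      _ = ((m : ℝ) * S) ^ 2 * ∑ i : Fin m, ‖x i‖ ^ 2 := by rw [hxxsum]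
  -- conclude
  rw [EuclideanSpace.norm_eq, EuclideanSpace.norm_eq]
  calc Real.sqrt (∑ i : Fin m, ‖(Matrix.toEuclideanCLM (𝕜 := ℂ)
        (Matrix.of fun i j : Fin m =>
          dividedDiff g ((Complex.exp (2 * Real.pi * Complex.I / m)) ^ (i : ℕ))
            ((Complex.exp (2 * Real.pi * Complex.I / m)) ^ (j : ℕ)))) x i‖ ^ 2)
      ≤ Real.sqrt (((m : ℝ) * S) ^ 2 * ∑ i : Fin m, ‖x i‖ ^ 2) := Real.sqrt_le_sqrt key
    _ = (m : ℝ) * S * Real.sqrt (∑ i : Fin m, ‖x i‖ ^ 2) := by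
        rw [Real.sqrt_mul (sq_nonneg _), Real.sqrt_sq (by positivity)]
end

section
/- The operator norm on L²(𝕋) of the integral operator with kernel the divided difference (Δg)(ζ,τ) of a polynomial g is at most ‖g‖_{L^∞(𝕋)}. -/
open Complex MeasureTheory AddCircle Polynomial Finset

instance : Fact (0 < 2 * Real.pi) := ⟨by positivity⟩

lemma fourier_natCast {T : ℝ} [Fact (0 < T)] (k : ℕ) (x : AddCircle T) :
    fourier (k : ℤ) x = (toCircle x : ℂ) ^ k := by
  induction k with
  | zero => simpa using fourier_zero
  | succ n ih =>
      push_cast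
      rw [fourier_add, ih, fourier_one, pow_succ]

lemma dividedDiff_eq_sum (g : Polynomial ℂ) (z w : ℂ) :
    dividedDiff g z w =
      ∑ n ∈ range (g.natDegree + 1), g.coeff n * ∑ j ∈ range n, z ^ j * w ^ (n - 1 - j) := by
  unfold dividedDiff
  split_ifs with h
  · subst h
    rw [Polynomial.derivative_eval,
      Polynomial.sum_over_range' g (by simp) (g.natDegree + 1) (Nat.lt_succ_self _)]
    refine Finset.sum_congr rfl fun n _ => ?_
    have : ∑ j ∈ range n, z ^ j * z ^ (n - 1 - j) = n * z ^ (n - 1) := by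
      rw [Finset.sum_congr rfl (fun j hj => ?_), Finset.sum_const, Finset.card_range,
        nsmul_eq_mul]
      rw [← pow_add]
      congr 1
      have := Finset.mem_range.mp hj
      omega
    rw [this]; ring
  · rw [div_eq_iff (sub_ne_zero.mpr h)]
    rw [Finset.sum_mul]
    rw [Polynomial.eval_eq_sum_range, Polynomial.eval_eq_sum_range, ← Finset.sum_sub_distrib]
    refine Finset.sum_congr rfl fun n _ => ?_
    rw [mul_assoc, geom_sum₂_mul, mul_sub]

/-- a.e. pointwise description of a finite linear combination of `fourierLp` elements. -/
lemma coeFn_sum_smul_fourierLp {T : ℝ} [Fact (0 < T)] {ι : Type*} (s : Finset ι)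
    (c : ι → ℂ) (n : ι → ℤ) :
    ⇑(∑ i ∈ s, c i • fourierLp (T := T) 2 (n i)) =ᵐ[haarAddCircle]
      fun x => ∑ i ∈ s, c i * fourier (n i) x := by
  classical
  induction s using Finset.induction with
  | empty => simp; exact Lp.coeFn_zero ℂ 2 _
  | @insert a s' h ih =>
      rw [Finset.sum_insert h]
      filter_upwards [Lp.coeFn_add (c a • fourierLp (T := T) 2 (n a))
        (∑ i ∈ s', c i • fourierLp (T := T) 2 (n i)), ih,
        Lp.coeFn_smul (c a) (fourierLp (T := T) 2 (n a)), coeFn_fourierLp (T := T) 2 (n a)]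
        with x hx1 hx2 hx3 hx4
      rw [hx1, Pi.add_apply, hx2, hx3, Finset.sum_insert h, Pi.smul_apply, hx4,
        smul_eq_mul]

/-- the integral operator on `L²(𝕋)` (normalized Lebesgue measure) with
kernel the divided difference `(Δg)(ζ,τ)` of a polynomial `g` has operator norm at most
`‖g‖_{L^∞(𝕋)}`. -/
theorem intOp_dividedDiff_norm_le (g : Polynomial ℂ)
    (A : Lp ℂ 2 (haarAddCircle (T := 2 * Real.pi)) →L[ℂ]
         Lp ℂ 2 (haarAddCircle (T := 2 * Real.pi)))
    (hA : ∀ φ : Lp ℂ 2 (haarAddCircle (T := 2 * Real.pi)),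
      A φ =ᵐ[haarAddCircle] fun x : AddCircle (2 * Real.pi) =>
        ∫ y : AddCircle (2 * Real.pi),
          dividedDiff g ((toCircle x : ℂ)) ((toCircle y : ℂ)) * φ y ∂haarAddCircle) :
    ‖A‖ ≤ sSup ((fun z => ‖g.eval z‖) '' {z : ℂ | ‖z‖ = 1}) := by
  have hsph : {z : ℂ | ‖z‖ = 1} = Metric.sphere (0 : ℂ) 1 := by
    ext z
    simp [Complex.dist_eq]
  have hbdd : BddAbove ((fun z => ‖g.eval z‖) '' {z : ℂ | ‖z‖ = 1}) := by
    rw [hsph]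
    exact ((isCompact_sphere (0 : ℂ) 1).image
      (continuous_norm.comp g.continuous)).bddAbove
  set C := sSup ((fun z => ‖g.eval z‖) '' {z : ℂ | ‖z‖ = 1}) with hCdef
  have hle : ∀ z : ℂ, ‖z‖ = 1 → ‖g.eval z‖ ≤ C := fun z hz =>
    le_csSup hbdd ⟨z, hz, rfl⟩
  have hC0 : 0 ≤ C := le_trans (norm_nonneg _) (hle 1 (by simp))
  refine A.opNorm_le_bound hC0 fun φ => ?_
  -- notation
  set d := g.natDegree + 1 with hd
  set m : ℕ → ℂ := fun k => fourierCoeff (⇑φ) (-(k : ℤ)) with hmdef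
  have hmint : ∀ k : ℕ,
      m k = ∫ y, ((toCircle y : ℂ) ^ k) * φ y ∂(haarAddCircle (T := 2 * Real.pi)) := by
    intro k
    rw [hmdef]
    simp only [fourierCoeff, neg_neg]
    exact integral_congr_ae (Filter.Eventually.of_forall fun y => by
      simp only [fourier_natCast, smul_eq_mul])
  set a : ℕ → ℂ := fun j =>
    ∑ n ∈ range d, if j < n then g.coeff n * m (n - 1 - j) else 0 with hadef
  have hφi : Integrable (⇑φ) (haarAddCircle (T := 2 * Real.pi)) :=
    (Lp.memLp φ).integrable (by norm_num)
  have hki : ∀ k : ℕ,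
      Integrable (fun y => ((toCircle y : ℂ) ^ k) * φ y) (haarAddCircle (T := 2 * Real.pi)) := by
    intro k
    refine hφi.bdd_mul (c := 1) ?_ (Filter.Eventually.of_forall fun y => ?_)
    · refine Continuous.aestronglyMeasurable ?_
      have : Continuous fun y : AddCircle (2 * Real.pi) => fourier (k : ℤ) y :=
        (fourier (k : ℤ)).continuous
      simpa only [fourier_natCast] using this
    · rw [← fourier_natCast, fourier_apply]
      simp [Circle.norm_coe]
  -- pointwise computation of the integral
  have hAP : ∀ x : AddCircle (2 * Real.pi),
      (∫ y, dividedDiff g ((toCircle x : ℂ)) ((toCircle y : ℂ)) * φ y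
          ∂(haarAddCircle (T := 2 * Real.pi)))
        = ∑ j ∈ range d, a j * fourier (j : ℤ) x := by
    intro x
    have h1 : ∀ y : AddCircle (2 * Real.pi),
        dividedDiff g ((toCircle x : ℂ)) ((toCircle y : ℂ)) * φ y
          = ∑ n ∈ range d, ∑ j ∈ range n,
              (g.coeff n * (toCircle x : ℂ) ^ j) * ((toCircle y : ℂ) ^ (n - 1 - j) * φ y) := by
      intro y
      rw [dividedDiff_eq_sum, Finset.sum_mul]
      refine Finset.sum_congr rfl fun n _ => ?_
      rw [mul_assoc, Finset.sum_mul, Finset.mul_sum]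
      exact Finset.sum_congr rfl fun j _ => by ring
    simp_rw [h1]
    rw [integral_finset_sum _ fun n _ =>
      integrable_finset_sum _ fun j _ => ((hki (n - 1 - j)).const_mul _)]
    have h2 : ∀ n ∈ range d,
        (∫ y, ∑ j ∈ range n,
            (g.coeff n * (toCircle x : ℂ) ^ j) * ((toCircle y : ℂ) ^ (n - 1 - j) * φ y)
            ∂(haarAddCircle (T := 2 * Real.pi)))
          = ∑ j ∈ range d,
              (if j < n then g.coeff n * m (n - 1 - j) else 0) * (toCircle x : ℂ) ^ j := by
      intro n hn
      rw [integral_finset_sum _ fun j _ => (hki (n - 1 - j)).const_mul _]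
      have hsub : range n ⊆ range d := Finset.range_subset_range.mpr (le_of_lt (mem_range.mp hn))
      rw [← Finset.sum_subset hsub (fun j _ hj => by
        rw [if_neg fun hlt => hj (Finset.mem_range.mpr hlt), zero_mul])]
      refine Finset.sum_congr rfl fun j hj => ?_
      rw [if_pos (mem_range.mp hj), MeasureTheory.integral_const_mul, ← hmint]
      ring
    rw [Finset.sum_congr rfl h2, Finset.sum_comm]
    refine Finset.sum_congr rfl fun j _ => ?_
    rw [fourier_natCast, hadef, ← Finset.sum_mul]
  -- the image of φ as an Lp element
  set S : Lp ℂ 2 (haarAddCircle (T := 2 * Real.pi)) :=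
    ∑ j ∈ range d, a j • fourierLp (T := 2 * Real.pi) 2 (j : ℤ) with hSdef
  have hAS : A φ = S := by
    apply MeasureTheory.Lp.ext
    have h4 : ⇑S =ᵐ[haarAddCircle (T := 2 * Real.pi)]
        fun x => ∑ j ∈ range d, a j * fourier (j : ℤ) x := by
      rw [hSdef]
      exact coeFn_sum_smul_fourierLp (range d) a (fun j => (j : ℤ))
    refine (hA φ).trans (Filter.EventuallyEq.trans ?_ h4.symm)
    exact Filter.Eventually.of_forall hAP
  -- orthonormality
  have hv : Orthonormal ℂ (fun j : ℕ => fourierLp (T := 2 * Real.pi) 2 (j : ℤ)) :=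
    orthonormal_fourier.comp _ fun p q h => by exact_mod_cast h
  have hS2 : ‖S‖ ^ 2 = ∑ j ∈ range d, ‖a j‖ ^ 2 := by
    rw [← inner_self_eq_norm_sq (𝕜 := ℂ), hSdef, hv.inner_sum a a (range d), map_sum]
    refine Finset.sum_congr rfl fun j _ => ?_
    rw [RCLike.conj_mul]
    norm_cast
  -- the auxiliary Laurent polynomial F = g(ζ) ζ⁻¹ h(ζ)
  set Fel : Lp ℂ 2 (haarAddCircle (T := 2 * Real.pi)) :=
    ∑ p ∈ (range d) ×ˢ (range d),
      (g.coeff p.1 * m p.2) • fourierLp (T := 2 * Real.pi) 2 ((p.1 : ℤ) - 1 - (p.2 : ℤ))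
    with hFdef
  have hinner : ∀ j ∈ range d,
      (inner ℂ (fourierLp (T := 2 * Real.pi) 2 (j : ℤ)) Fel : ℂ) = a j := by
    intro j hj
    rw [hFdef]
    simp_rw [inner_sum, inner_smul_right,
      orthonormal_iff_ite.mp (orthonormal_fourier (T := 2 * Real.pi)), mul_ite, mul_one,
      mul_zero]
    rw [Finset.sum_product, hadef]
    refine Finset.sum_congr rfl fun n hn => ?_
    have hnd := mem_range.mp hn
    by_cases hjn : j < n
    · rw [if_pos hjn, Finset.sum_eq_single (n - 1 - j)]
      · rw [if_pos (by omega)]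
      · intro k _ hne
        rw [if_neg fun h => hne (by omega)]
      · intro habs
        exact absurd (Finset.mem_range.mpr (by omega)) habs
    · rw [if_neg hjn, Finset.sum_eq_zero]
      intro k _
      rw [if_neg fun h => hjn (by omega)]
  have hbessel : ∑ j ∈ range d, ‖a j‖ ^ 2 ≤ ‖Fel‖ ^ 2 := by
    have hinj : ∀ p ∈ range d, ∀ q ∈ range d, (p : ℤ) = (q : ℤ) → p = q := by
      intro p _ q _ h
      exact_mod_cast h
    have h := (orthonormal_fourier (T := 2 * Real.pi)).sum_inner_products_le
      (s := (range d).image fun j : ℕ => (j : ℤ)) Fel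
    rw [Finset.sum_image hinj] at h
    refine le_trans (le_of_eq (Finset.sum_congr rfl fun j hj => ?_)) h
    rw [hinner j hj]
  -- the auxiliary anti-analytic polynomial h
  set hel : Lp ℂ 2 (haarAddCircle (T := 2 * Real.pi)) :=
    ∑ k ∈ range d, m k • fourierLp (T := 2 * Real.pi) 2 (-(k : ℤ)) with hhdef
  have hw : Orthonormal ℂ (fun k : ℕ => fourierLp (T := 2 * Real.pi) 2 (-(k : ℤ))) :=
    orthonormal_fourier.comp _ fun p q h => by
      have : -(p : ℤ) = -(q : ℤ) := h
      omega
  have hhel2 : ‖hel‖ ^ 2 = ∑ k ∈ range d, ‖m k‖ ^ 2 := by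
    rw [← inner_self_eq_norm_sq (𝕜 := ℂ), hhdef, hw.inner_sum m m (range d), map_sum]
    refine Finset.sum_congr rfl fun k _ => ?_
    rw [RCLike.conj_mul]
    norm_cast
  -- pointwise bound : ‖Fel‖ ≤ C * ‖hel‖
  have hFle : ‖Fel‖ ≤ C * ‖hel‖ := by
    have hkey : ‖Fel‖ ≤ ‖(C : ℂ) • hel‖ := by
      apply MeasureTheory.Lp.norm_le_norm_of_ae_le
      have hFcoe := coeFn_sum_smul_fourierLp (T := 2 * Real.pi) ((range d) ×ˢ (range d))
        (fun p => g.coeff p.1 * m p.2) (fun p => (p.1 : ℤ) - 1 - (p.2 : ℤ))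
      have hhcoe := coeFn_sum_smul_fourierLp (T := 2 * Real.pi) (range d) m
        (fun k => -(k : ℤ))
      filter_upwards [hFcoe, hhcoe, Lp.coeFn_smul (C : ℂ) hel] with x h1 h2 h3
      rw [← hFdef] at h1
      rw [← hhdef] at h2
      rw [h1, h3, Pi.smul_apply, h2, smul_eq_mul]
      have hfact : (∑ p ∈ (range d) ×ˢ (range d),
            (g.coeff p.1 * m p.2) * fourier ((p.1 : ℤ) - 1 - (p.2 : ℤ)) x)
          = (g.eval (toCircle x : ℂ)) * (fourier (-1 : ℤ) x)
              * (∑ k ∈ range d, m k * fourier (-(k : ℤ)) x) := by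
        rw [Finset.sum_product, Polynomial.eval_eq_sum_range, Finset.sum_mul, Finset.sum_mul]
        refine Finset.sum_congr rfl fun n _ => ?_
        rw [Finset.mul_sum]
        refine Finset.sum_congr rfl fun k _ => ?_
        rw [← fourier_natCast,
          show ((n : ℤ) - 1 - (k : ℤ)) = (n : ℤ) + (-1 + -(k : ℤ)) by ring,
          fourier_add, fourier_add]
        ring
      rw [hfact]
      rw [norm_mul, norm_mul, norm_mul]
      have h5 : ‖fourier (-1 : ℤ) x‖ = 1 := by
        rw [fourier_apply]
        simp [Circle.norm_coe]
      have h6 : ‖g.eval (toCircle x : ℂ)‖ ≤ C := hle _ (Circle.norm_coe _)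
      have h7 : ‖(C : ℂ)‖ = C := by
        rw [Complex.norm_real, Real.norm_of_nonneg hC0]
      rw [h5, h7, mul_one]
      exact mul_le_mul_of_nonneg_right h6 (norm_nonneg _)
    rw [norm_smul] at hkey
    have h7 : ‖(C : ℂ)‖ = C := by
      rw [Complex.norm_real, Real.norm_of_nonneg hC0]
    rwa [h7] at hkey
  -- Bessel for φ
  have hm2 : ∑ k ∈ range d, ‖m k‖ ^ 2 ≤ ‖φ‖ ^ 2 := by
    have hinj : ∀ p ∈ range d, ∀ q ∈ range d, -(p : ℤ) = -(q : ℤ) → p = q := by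
      intro p _ q _ h
      omega
    have h := (orthonormal_fourier (T := 2 * Real.pi)).sum_inner_products_le
      (s := (range d).image fun k : ℕ => -(k : ℤ)) φ
    rw [Finset.sum_image hinj] at h
    refine le_trans (le_of_eq (Finset.sum_congr rfl fun k _ => ?_)) h
    congr 1
    simp only [hmdef]
    rw [← fourierBasis_repr, ← coe_fourierBasis, fourierBasis.repr_apply_apply]
  -- put everything together
  have hsq : ‖A φ‖ ^ 2 ≤ (C * ‖φ‖) ^ 2 := by
    rw [hAS, hS2]
    calc ∑ j ∈ range d, ‖a j‖ ^ 2 ≤ ‖Fel‖ ^ 2 := hbessel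
      _ ≤ (C * ‖hel‖) ^ 2 := by
          exact pow_le_pow_left₀ (norm_nonneg _) hFle 2
      _ = C ^ 2 * ‖hel‖ ^ 2 := by ring
      _ = C ^ 2 * ∑ k ∈ range d, ‖m k‖ ^ 2 := by rw [hhel2]
      _ ≤ C ^ 2 * ‖φ‖ ^ 2 := by
          exact mul_le_mul_of_nonneg_left hm2 (by positivity)
      _ = (C * ‖φ‖) ^ 2 := by ring
  nlinarith [norm_nonneg (A φ), mul_nonneg hC0 (norm_nonneg φ)]
end
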